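/- arXiv:2410.12594 — 4 statements merged into one kernel-verified Lean document; each statement's English description precedes it below -/
import Mathlib

section
/- Let G be a connected graph of treelength at most k ≥ 1 and let A ⊆ V(G) be such that the induced subgraph G[A] is connected. Then every shortest path in G between two vertices a, b ∈ A is contained in the set N^{≤3k/2}[A] of vertices at distance at most 3k/2 from A. -/
open SimpleGraph

/-- A (pair of) tree `Tr` and bags `B` forming a tree decomposition of `G`. -/
structure IsTreeDecomp {V T : Type} (G : SimpleGraph V) (Tr : SimpleGraph T)
    (B : T → Set V) : Prop where
  tree_connected : Tr.Connected
  tree_acyclic : Tr.IsAcyclic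
  bags_cover : ∀ v : V, ∃ t, v ∈ B t
  bags_subtree : ∀ v : V, (Tr.induce {t | v ∈ B t}).Connected
  edges_in_bag : ∀ u v : V, G.Adj u v → ∃ t, u ∈ B t ∧ v ∈ B t

/-- `G` has treelength at most `k`: some tree decomposition in which any two
vertices sharing a bag are at graph distance at most `k`. -/
def TreelengthLE {V : Type} (G : SimpleGraph V) (k : ℕ) : Prop :=
  ∃ (T : Type) (Tr : SimpleGraph T) (B : T → Set V),
    IsTreeDecomp G Tr B ∧ ∀ t : T, ∀ u ∈ B t, ∀ v ∈ B t, G.edist u v ≤ k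

/-!
Fix `x` on the geodesic `p` and a bag containing `x`. Since `G[A]` is connected, the nodes whose
bags meet `A` span a subtree, and there is a node `t` of it through which every tree walk from the
bag of `x` into that subtree passes. The bag `B t` therefore separates `x` from `a` and from `b`,
so the two halves of `p` at `x` meet `B t` in vertices `u` and `v`. As `p` is a geodesic,
`d(u, x) + d(x, v) ≤ d(u, v) ≤ k`, so `x` is within `k / 2` of `u` or `v`, and both lie within `k`
of a vertex `a' ∈ A ∩ B t`.
-/

namespace SimpleGraph

variable {V : Type*} {G : SimpleGraph V} {u v x a b : V}

theorem Preconnected.exists_walk_support_subset_of_induce {S : Set V}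
    (h : (G.induce S).Preconnected) (hu : u ∈ S) (hv : v ∈ S) : ∃ w : G.Walk u v, ∀ z ∈ w.support, z ∈ S := by
  obtain ⟨w⟩ := h ⟨u, hu⟩ ⟨v, hv⟩
  refine ⟨w.map (Embedding.induce S).toHom, fun z hz => ?_⟩
  replace hz : z ∈ w.support.map (Embedding.induce (G := G) S).toHom := by
    rwa [← Walk.support_map]
  rw [List.mem_map] at hz
  obtain ⟨⟨z, hzS⟩, -, rfl⟩ := hz
  exact hzS

theorem Walk.edist_add_edist_le_of_length_eq_dist [DecidableEq V] {p : G.Walk a b}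
    (hp : p.length = G.dist a b) (hx : x ∈ p.support) (hu : u ∈ (p.takeUntil x hx).support)
    (hv : v ∈ (p.dropUntil x hx).support) : G.edist u x + G.edist x v ≤ G.edist u v := by
  set q₁ := p.takeUntil x hx
  set q₂ := p.dropUntil x hx
  set w := (q₁.dropUntil u hu).append (q₂.takeUntil v hv)
  have hw : w.IsSubwalk p := by
    refine ⟨q₁.takeUntil u hu, q₂.dropUntil v hv, ?_⟩
    calc p = q₁.append q₂ := (p.take_spec hx).symm
      _ = ((q₁.takeUntil u hu).append (q₁.dropUntil u hu)).append
            ((q₂.takeUntil v hv).append (q₂.dropUntil v hv)) := by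
          rw [q₁.take_spec hu, q₂.take_spec hv]
      _ = _ := by simp only [w, Walk.append_assoc]
  calc G.edist u x + G.edist x v
      ≤ (q₁.dropUntil u hu).length + (q₂.takeUntil v hv).length :=
        add_le_add (edist_le _) (edist_le _)
    _ = G.dist u v := by
        rw [← length_eq_dist_of_subwalk hp hw, Walk.length_append, Nat.cast_add]
    _ = G.edist u v := w.reachable.coe_dist_eq_edist

theorem two_mul_edist_le_of_edist_add_edist_le {k : ℕ∞} (hx : G.edist u x + G.edist x v ≤ k)
    (hu : G.edist u a ≤ k) (hv : G.edist v a ≤ k) : 2 * G.edist x a ≤ 3 * k := by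
  wlog hle : G.edist x u ≤ G.edist x v generalizing u v
  · exact this (by rwa [add_comm, edist_comm, @edist_comm _ _ v]) hv hu (le_of_not_ge hle)
  calc 2 * G.edist x a ≤ 2 * (G.edist x u + G.edist u a) := by gcongr; exact G.edist_triangle
    _ = (G.edist u x + G.edist x u) + 2 * G.edist u a := by rw [edist_comm]; ring
    _ ≤ k + 2 * k := by gcongr; exact le_trans (by gcongr) hx
    _ = 3 * k := by ring

variable {T : Type*} {Tr : SimpleGraph T} {S : Set T} {s r : T}

theorem Walk.exists_walk_notMem_to_adj_mem (w : Tr.Walk s r) (hs : s ∉ S) (hr : r ∈ S) :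
    ∃ x t, Tr.Adj x t ∧ t ∈ S ∧ ∃ q : Tr.Walk s x, ∀ z ∈ q.support, z ∉ S := by
  induction w with
  | nil => exact absurd hr hs
  | @cons s y r h w ih =>
    by_cases hy : y ∈ S
    · exact ⟨s, y, h, hy, .nil, by simpa using hs⟩
    · obtain ⟨x, t, hxt, htS, q, hq⟩ := ih hy hr
      refine ⟨x, t, hxt, htS, .cons h q, ?_⟩
      simpa [Walk.support_cons] using ⟨hs, hq⟩

/-- `t` is where a walk from `s` first enters `S`. The edge into `t` is a bridge, so a walk from `s`
to `S` avoiding `t`, closed up inside `S`, would cross it a second time. -/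
theorem IsAcyclic.exists_forall_mem_support (hac : Tr.IsAcyclic)
    (hS : (Tr.induce S).Preconnected) (hsr : Tr.Reachable s r) (hr : r ∈ S) :
    ∃ t ∈ S, ∀ r' ∈ S, ∀ w : Tr.Walk s r', t ∈ w.support := by
  by_cases hs : s ∈ S
  · exact ⟨s, hs, fun _ _ w => w.start_mem_support⟩
  obtain ⟨x, t, hxt, htS, q, hq⟩ := hsr.some.exists_walk_notMem_to_adj_mem hs hr
  refine ⟨t, htS, fun r' hr' w => ?_⟩
  by_contra htw
  obtain ⟨wS, hwS⟩ := hS.exists_walk_support_subset_of_induce hr' htS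
  have hbridge := isBridge_iff_forall_walk_mem_edges.mp
    (isAcyclic_iff_forall_adj_isBridge.mp hac hxt)
  have he := hbridge (q.reverse.append (w.append wS))
  simp only [Walk.edges_append, Walk.edges_reverse, List.mem_append, List.mem_reverse] at he
  rcases he with he | he | he
  · exact hq t (q.snd_mem_support_of_mem_edges he) htS
  · exact htw (w.snd_mem_support_of_mem_edges he)
  · exact hq x q.end_mem_support (hwS x (wS.fst_mem_support_of_mem_edges he))

end SimpleGraph

namespace IsTreeDecomp

variable {V T : Type} {G : SimpleGraph V} {Tr : SimpleGraph T} {B : T → Set V}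

theorem mem_bag_of_forall_mem_support (hd : IsTreeDecomp G Tr B) {v : V} {s₁ s₂ t : T}
    (h₁ : v ∈ B s₁) (h₂ : v ∈ B s₂) (hsep : ∀ W : Tr.Walk s₁ s₂, t ∈ W.support) : v ∈ B t := by
  obtain ⟨W, hW⟩ := (hd.bags_subtree v).preconnected.exists_walk_support_subset_of_induce h₁ h₂
  exact hW t (hsep W)

theorem exists_mem_support_mem_bag (hd : IsTreeDecomp G Tr B) {s₁ s₂ t : T}
    (hsep : ∀ W : Tr.Walk s₁ s₂, t ∈ W.support) {u v : V} (w : G.Walk u v)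
    (hu : u ∈ B s₁) (hv : v ∈ B s₂) : ∃ z ∈ w.support, z ∈ B t := by
  induction w generalizing s₁ with
  | nil => exact ⟨_, Walk.start_mem_support _, hd.mem_bag_of_forall_mem_support hu hv hsep⟩
  | @cons u y v h w ih =>
    obtain ⟨s, hus, hys⟩ := hd.edges_in_bag u y h
    by_cases hsep' : ∀ W : Tr.Walk s s₂, t ∈ W.support
    · obtain ⟨z, hz, hzt⟩ := ih hsep' hys hv
      exact ⟨z, List.mem_cons_of_mem _ hz, hzt⟩
    · obtain ⟨W₂, hW₂⟩ := not_forall.mp hsep'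
      refine ⟨u, Walk.start_mem_support _, hd.mem_bag_of_forall_mem_support hu hus fun W₁ => ?_⟩
      simpa [hW₂] using hsep (W₁.append W₂)

theorem preconnected_induce_setOf_bag_meets (hd : IsTreeDecomp G Tr B) {A : Set V}
    (hA : (G.induce A).Preconnected) : (Tr.induce {t | ∃ a ∈ A, a ∈ B t}).Preconnected := by
  set S := {t | ∃ a ∈ A, a ∈ B t}
  have hbags : ∀ a (ha : a ∈ A) {t t' : T} (ht : a ∈ B t) (ht' : a ∈ B t'),
      (Tr.induce S).Reachable ⟨t, a, ha, ht⟩ ⟨t', a, ha, ht'⟩ := fun a ha {t t'} ht ht' =>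
    ((hd.bags_subtree a).preconnected ⟨t, ht⟩ ⟨t', ht'⟩).map
      (Tr.induceHomOfLE (show {t | a ∈ B t} ⊆ S from fun _ hs => ⟨a, ha, hs⟩)).toHom
  have hwalk : ∀ {a a' : A} (w : (G.induce A).Walk a a') {t t' : T} (ht : ↑a ∈ B t)
      (ht' : ↑a' ∈ B t'), (Tr.induce S).Reachable ⟨t, a, a.2, ht⟩ ⟨t', a', a'.2, ht'⟩ := by
    intro a a' w
    induction w with
    | nil => exact fun ht ht' => hbags _ (Subtype.prop _) ht ht'
    | @cons a y a' h w ih =>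
      intro t t' ht ht'
      obtain ⟨s, has, hys⟩ := hd.edges_in_bag a y h
      exact (hbags _ a.2 ht has).trans (ih hys ht')
  rintro ⟨t, a, ha, hat⟩ ⟨t', a', ha', hat'⟩
  obtain ⟨w⟩ := hA ⟨a, ha⟩ ⟨a', ha'⟩
  exact hwalk w hat hat'

end IsTreeDecomp

theorem stmt0_general {V : Type} (G : SimpleGraph V) (k : ℕ)
    (htl : TreelengthLE G k) (A : Set V)
    (hA : (G.induce A).Connected) (a b : V) (ha : a ∈ A) (hb : b ∈ A)
    (p : G.Walk a b) (hp : p.length = G.dist a b) :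
    ∀ x ∈ p.support, ∃ a' ∈ A, 2 * G.edist x a' ≤ 3 * k := by
  classical
  obtain ⟨T, Tr, B, hd, hlen⟩ := htl
  intro x hx
  obtain ⟨sx, hsx⟩ := hd.bags_cover x
  obtain ⟨sa, hsa⟩ := hd.bags_cover a
  obtain ⟨sb, hsb⟩ := hd.bags_cover b
  obtain ⟨t, ⟨a', ha', ha't⟩, hsep⟩ := hd.tree_acyclic.exists_forall_mem_support
    (hd.preconnected_induce_setOf_bag_meets hA.preconnected) (hd.tree_connected sx sa)
    ⟨a, ha, hsa⟩
  obtain ⟨u, hu, hut⟩ := hd.exists_mem_support_mem_bag (hsep sa ⟨a, ha, hsa⟩)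
    (p.takeUntil x hx).reverse hsx hsa
  obtain ⟨v, hv, hvt⟩ := hd.exists_mem_support_mem_bag (hsep sb ⟨b, hb, hsb⟩)
    (p.dropUntil x hx) hsx hsb
  refine ⟨a', ha', two_mul_edist_le_of_edist_add_edist_le ?_ (hlen t u hut a' ha't)
    (hlen t v hvt a' ha't)⟩
  rw [Walk.support_reverse, List.mem_reverse] at hu
  exact (p.edist_add_edist_le_of_length_eq_dist hp hx hu hv).trans (hlen t u hut v hvt)

theorem stmt0 {V : Type} (G : SimpleGraph V) (k : ℕ) (hk : 1 ≤ k)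
    (hG : G.Connected) (htl : TreelengthLE G k) (A : Set V)
    (hA : (G.induce A).Connected) (a b : V) (ha : a ∈ A) (hb : b ∈ A)
    (p : G.Walk a b) (hp : p.length = G.dist a b) :
    ∀ x ∈ p.support, ∃ a' ∈ A, 2 * G.edist x a' ≤ 3 * k :=
  stmt0_general G k htl A hA a b ha hb p hp
end

section
/- Let G be a connected graph with maximum degree at most Δ and treelength at most k, and let A ⊆ V(G) be such that G[A] is connected with |A| = n_A ≥ 2. Define, for a vertex v ∈ V(G), the betweenness p_v(A) as the fraction of unordered pairs {a,b} ⊆ A such that v lies on some shortest path in G between a and b. Then there exists a vertex v at distance at most k from A with p_v(A) ≥ 1/(2(Δ^k + 1)). -/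
open SimpleGraph

/-- Betweenness of `z` with respect to `A`: the fraction of (ordered) pairs of
distinct vertices of `A` such that `z` lies on some shortest path between them. -/
noncomputable def btw {V : Type} (G : SimpleGraph V) (A : Set V) (z : V) : ℝ :=
  ({p : V × V | p.1 ∈ A ∧ p.2 ∈ A ∧ p.1 ≠ p.2 ∧
      G.edist p.1 z + G.edist z p.2 = G.edist p.1 p.2}.ncard : ℝ) /
  ({p : V × V | p.1 ∈ A ∧ p.2 ∈ A ∧ p.1 ≠ p.2}.ncard : ℝ)


/-!
Fix a tree decomposition of length at most `k`, pick for every vertex a bag containing it, and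
let `t` be a centroid node of the tree for these bags of the vertices of `A`: every component of
`T - t` holds the chosen bags of at most half of `A`. If no vertex of the bag `B t` lies on a
geodesic from `a` to `b`, then a geodesic avoids `B t`, so the bags of `a` and `b` lie in the same
component of `T - t`; hence at least half of the ordered pairs of `A` have a vertex of `B t` on a
geodesic. Since `G[A]` is connected, `B t` meets `A`, so `B t` lies in a ball of radius `k`, which
has at most `Δ ^ k + 1` vertices. By pigeonhole one vertex of `B t` lies between at least a
`1 / (2 (Δ ^ k + 1))` fraction of the pairs.
-/

open Finset

namespace SimpleGraph

-- `x` and `y` lie in the same component of `Tr - t`.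
def ReachableAvoiding {T : Type*} (Tr : SimpleGraph T) (t x y : T) : Prop :=
  ∃ w : Tr.Walk x y, t ∉ w.support

def IsBetween {V : Type*} (G : SimpleGraph V) (x a b : V) : Prop :=
  G.edist a x + G.edist x b = G.edist a b

section Tree

variable {T ι : Type*} {Tr : SimpleGraph T} {t u x y z : T}

namespace ReachableAvoiding

theorem ne_left (h : Tr.ReachableAvoiding t x y) : x ≠ t := by
  obtain ⟨w, hw⟩ := h
  rintro rfl
  exact hw w.start_mem_support

protected theorem refl (h : x ≠ t) : Tr.ReachableAvoiding t x x :=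
  ⟨.nil, by simpa using h.symm⟩

protected theorem trans (h : Tr.ReachableAvoiding t x y) (h' : Tr.ReachableAvoiding t y z) :
    Tr.ReachableAvoiding t x z := by
  obtain ⟨w, hw⟩ := h
  obtain ⟨w', hw'⟩ := h'
  exact ⟨w.append w', by rw [Walk.mem_support_append_iff]; tauto⟩

end ReachableAvoiding

theorem Reachable.exists_adj_reachableAvoiding (h : Tr.Reachable t x) (hx : x ≠ t) :
    ∃ u, Tr.Adj t u ∧ Tr.ReachableAvoiding t u x := by
  classical
  obtain ⟨p, hp, -⟩ := h.exists_path_of_dist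
  cases p with
  | nil => exact absurd rfl hx
  | cons hadj q => exact ⟨_, hadj, q, ((Walk.cons_isPath_iff hadj q).1 hp).2⟩

-- The path `t, u, ... , y` avoiding `t` afterwards is the unique, hence shortest, path.
theorem IsAcyclic.dist_lt_of_adj_of_reachableAvoiding (hTr : Tr.IsAcyclic) (htu : Tr.Adj t u)
    (h : Tr.ReachableAvoiding t u y) : Tr.dist u y < Tr.dist t y := by
  classical
  obtain ⟨w, hw⟩ := h
  set q := Walk.cons htu w.bypass
  have hq : q.IsPath := w.bypass_isPath.cons fun ht => hw (w.support_bypass_subset_support ht)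
  obtain ⟨r, hr, hlen⟩ := q.reachable.exists_path_of_dist
  have hrq : r = q :=
    congrArg Subtype.val ((hTr.subsingleton_path _ _).elim ⟨r, hr⟩ ⟨q, hq⟩)
  calc Tr.dist u y ≤ w.bypass.length := dist_le _
    _ < q.length := by simp [q]
    _ = Tr.dist t y := by rw [← hrq, hlen]

open scoped Classical

def IsCentroid (Tr : SimpleGraph T) (s : Finset ι) (φ : ι → T) (t : T) : Prop :=
  ∀ x, 2 * #{a ∈ s | Tr.ReachableAvoiding t x (φ a)} ≤ #s

theorem IsAcyclic.sum_dist_lt_of_adj (hTr : Tr.IsAcyclic) (hc : Tr.Connected) {s : Finset ι}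
    {φ : ι → T} (htu : Tr.Adj t u) (h : #s < 2 * #{a ∈ s | Tr.ReachableAvoiding t u (φ a)}) :
    ∑ a ∈ s, Tr.dist u (φ a) < ∑ a ∈ s, Tr.dist t (φ a) := by
  have hstep : ∀ a ∈ s,
      Tr.dist u (φ a) + 2 * (if Tr.ReachableAvoiding t u (φ a) then 1 else 0)
        ≤ Tr.dist t (φ a) + 1 := by
    intro a _
    split_ifs with ha
    · have := hTr.dist_lt_of_adj_of_reachableAvoiding htu ha
      omega
    · have hut : Tr.dist u t = 1 := dist_eq_one_iff_adj.2 htu.symm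
      have := hc.dist_triangle (u := u) (v := t) (w := φ a)
      omega
  have hsum := sum_le_sum hstep
  rw [sum_add_distrib, sum_add_distrib, ← mul_sum, ← card_filter, sum_const, smul_eq_mul,
    mul_one] at hsum
  omega

-- A node minimising the total distance to the points `φ a` is a centroid.
theorem IsAcyclic.exists_isCentroid (hTr : Tr.IsAcyclic) (hc : Tr.Connected) (s : Finset ι)
    (φ : ι → T) : ∃ t, Tr.IsCentroid s φ t := by
  have := hc.nonempty
  let f t := ∑ a ∈ s, Tr.dist t (φ a)
  refine ⟨Function.argmin f, fun x => ?_⟩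
  set t := Function.argmin f
  by_contra! hx
  have hxt : x ≠ t := by
    rintro rfl
    rw [filter_false_of_mem fun a _ ha => ha.ne_left rfl] at hx
    simp at hx
  obtain ⟨u, htu, hux⟩ := (hc t x).exists_adj_reachableAvoiding hxt
  refine Function.not_lt_argmin f u (hTr.sum_dist_lt_of_adj hc htu (hx.trans_le ?_))
  gcongr with a _
  exact hux.trans

end Tree

variable {V : Type*} {G : SimpleGraph V} {a b v x : V}

theorem Walk.isBetween_of_mem_support {w : G.Walk a b} (hw : (w.length : ℕ∞) = G.edist a b)
    (hx : x ∈ w.support) : G.IsBetween x a b := by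
  classical
  refine le_antisymm ?_ G.edist_triangle
  calc G.edist a x + G.edist x b
      ≤ (w.takeUntil x hx).length + (w.dropUntil x hx).length :=
        add_le_add (edist_le _) (edist_le _)
    _ = G.edist a b := by rw [← hw, ← Nat.cast_add, ← Walk.length_append, Walk.take_spec]

theorem Reachable.exists_walk_of_induce {s : Set V} {a b : s} (h : (G.induce s).Reachable a b) :
    ∃ w : G.Walk a b, ∀ x ∈ w.support, x ∈ s := by
  obtain ⟨w⟩ := h
  induction w with
  | nil => exact ⟨.nil, by simp⟩
  | @cons u v _ hadj _ ih =>
    obtain ⟨w, hw⟩ := ih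
    refine ⟨.cons (show G.Adj u v from hadj) w, fun x hx => ?_⟩
    rw [Walk.support_cons, List.mem_cons] at hx
    exact hx.elim (· ▸ u.2) (hw x)

theorem exists_adj_edist_eq_of_edist_eq_add_one {j : ℕ} (h : G.edist a v = j + 1) :
    ∃ u, G.Adj u v ∧ G.edist a u = j := by
  obtain ⟨p, hp⟩ := exists_walk_of_edist_eq_coe (k := j + 1) (by exact_mod_cast h)
  cases hrev : p.reverse with
  | nil => simpa [hp] using congrArg Walk.length hrev
  | @cons _ u _ hadj q =>
    have hq : q.length = j := by simpa [hp] using (congrArg Walk.length hrev).symm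
    refine ⟨u, hadj.symm, le_antisymm (by simpa [hq] using edist_le q.reverse) ?_⟩
    have := h ▸ G.edist_triangle (u := a) (v := u) (w := v)
    rwa [edist_eq_one_iff_adj.2 hadj.symm, ENat.add_le_add_iff_right ENat.one_ne_top] at this

variable [Fintype V] [DecidableRel G.Adj] {Δ : ℕ}

-- Each vertex at distance `j ≥ 1` from `a` has a neighbour at distance `j - 1`, so at most
-- `Δ - 1` neighbours at distance `j + 1`.
theorem card_edist_eq_add_one_add_le (hΔ : ∀ v, G.degree v ≤ Δ) (a : V) {j : ℕ}
    (hj : 1 ≤ j) :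
    #{v | G.edist a v = j + 1} + #{v | G.edist a v = j} ≤ Δ * #{v | G.edist a v = j} := by
  classical
  set S : ℕ → Finset V := fun i => {v | G.edist a v = i}
  have hcover :
      S (j + 1) ⊆ (S j).biUnion fun u => {v ∈ G.neighborFinset u | v ∈ S (j + 1)} := by
    intro v hv
    obtain ⟨u, huv, hu⟩ := exists_adj_edist_eq_of_edist_eq_add_one (by simpa [S] using hv)
    exact mem_biUnion.2 ⟨u, by simpa [S] using hu, mem_filter.2 ⟨by simpa using huv, hv⟩⟩
  have hfiber : ∀ u ∈ S j, #{v ∈ G.neighborFinset u | v ∈ S (j + 1)} + 1 ≤ Δ := by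
    intro u hu
    obtain ⟨i, rfl⟩ : ∃ i, j = i + 1 := ⟨j - 1, by omega⟩
    obtain ⟨w, hwu, hw⟩ := exists_adj_edist_eq_of_edist_eq_add_one (by simpa [S] using hu)
    have hssub : {v ∈ G.neighborFinset u | v ∈ S (i + 1 + 1)} ⊂ G.neighborFinset u :=
      filter_ssubset.2 ⟨w, by simpa using hwu.symm,
        by simp only [S, mem_filter, mem_univ, true_and, hw]; norm_cast; omega⟩
    exact (card_lt_card hssub).trans_le (card_neighborFinset_eq_degree G u ▸ hΔ u)
  calc #(S (j + 1)) + #(S j)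
      ≤ ∑ u ∈ S j, #{v ∈ G.neighborFinset u | v ∈ S (j + 1)} + ∑ _u ∈ S j, 1 := by
        rw [sum_const, smul_eq_mul, mul_one]
        exact Nat.add_le_add_right ((card_le_card hcover).trans card_biUnion_le) _
    _ ≤ ∑ _u ∈ S j, Δ := by rw [← sum_add_distrib]; exact sum_le_sum hfiber
    _ = Δ * #(S j) := by rw [sum_const, smul_eq_mul, mul_comm]

-- With `b k` and `s k` the sizes of the ball and sphere of radius `k` around `a`, the previous
-- lemma gives `b (k + 1) ≤ b k + (Δ - 1) * s k ≤ Δ * (b k - 1) + 1` for `k ≥ 1`.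
theorem card_edist_le_le_pow_add_one (hΔ : ∀ v, G.degree v ≤ Δ) (a : V) (k : ℕ) :
    #{v | G.edist a v ≤ k} ≤ Δ ^ k + 1 := by
  classical
  rcases k.eq_zero_or_pos with rfl | hk
  · calc #{v | G.edist a v ≤ (0 : ℕ)} ≤ #{a} :=
          card_le_card fun v hv => by simpa [edist_eq_zero_iff, eq_comm (a := a)] using hv
      _ ≤ Δ ^ 0 + 1 := by simp
  induction k, hk using Nat.le_induction with
  | base =>
    calc #{v | G.edist a v ≤ (1 : ℕ)} ≤ #(insert a (G.neighborFinset a)) :=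
          card_le_card fun v hv => by simpa [edist_le_one_iff_adj_or_eq, or_comm, eq_comm] using hv
      _ ≤ Δ ^ 1 + 1 := (card_insert_le _ _).trans (by simpa using hΔ a)
  | succ k hk ih =>
    have hball : #{v | G.edist a v ≤ (k + 1 : ℕ)} =
        #{v | G.edist a v ≤ k} + #{v | G.edist a v = (k + 1 : ℕ)} := by
      rw [← card_union_of_disjoint (disjoint_filter.2 fun v _ h h' => by
        rw [h'] at h; norm_cast at h; omega)]
      congr 1
      ext v
      simp only [mem_filter, mem_univ, true_and, mem_union, Nat.cast_add, Nat.cast_one]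
      exact le_iff_lt_or_eq.trans (or_congr_left ENat.lt_natCast_add_one_iff)
    have hsphere : #{v | G.edist a v = k} + 1 ≤ #{v | G.edist a v ≤ k} := by
      rw [← card_insert_of_notMem (s := {v | G.edist a v = k}) (a := a)
        (by simp only [mem_filter, mem_univ, edist_self, true_and]; norm_cast; omega)]
      exact card_le_card (insert_subset (by simp) fun v hv => by simp_all)
    have hstep := card_edist_eq_add_one_add_le hΔ a hk
    push_cast at hball ⊢
    rcases Δ with _ | d
    · simp only [zero_mul, nonpos_iff_eq_zero, add_eq_zero] at hstep
      simp only [zero_pow (by omega : k ≠ 0), zero_add] at ih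
      omega
    · rw [pow_succ]
      nlinarith

end SimpleGraph

namespace Finset

variable {α β : Type*} [DecidableEq α]

theorem card_mul_self_le_two_mul_card_filter_offDiag {s : Finset α} (P : α → α → Prop)
    [DecidableRel P] (h : ∀ a ∈ s, 2 * #{b ∈ s | b ≠ a ∧ ¬P a b} + 2 ≤ #s) :
    #s * #s ≤ 2 * #{p ∈ s.offDiag | P p.1 p.2} := by
  have hbad : #{p ∈ s.offDiag | ¬P p.1 p.2} = ∑ a ∈ s, #{b ∈ s | b ≠ a ∧ ¬P a b} := by
    have : {p ∈ s.offDiag | ¬P p.1 p.2} = {p ∈ s ×ˢ s | p.2 ≠ p.1 ∧ ¬P p.1 p.2} := by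
      ext p
      simp [mem_offDiag, and_assoc, ne_comm]
    simp only [this, card_filter, sum_product]
  have hsum : 2 * #{p ∈ s.offDiag | ¬P p.1 p.2} + 2 * #s ≤ #s * #s := by
    calc 2 * #{p ∈ s.offDiag | ¬P p.1 p.2} + 2 * #s
        = ∑ a ∈ s, (2 * #{b ∈ s | b ≠ a ∧ ¬P a b} + 2) := by
          rw [hbad, sum_add_distrib, mul_sum, sum_const, smul_eq_mul, mul_comm]
      _ ≤ ∑ _a ∈ s, #s := sum_le_sum h
      _ = #s * #s := by rw [sum_const, smul_eq_mul]
  have hsplit := card_filter_add_card_filter_not (s := s.offDiag) (fun p => P p.1 p.2)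
  rw [offDiag_card] at hsplit
  generalize #s * #s = m at *
  omega

theorem exists_card_le_card_mul_card_of_subset_biUnion {X : Finset β} {S : Finset α}
    {F : β → Finset α} (hX : X.Nonempty) (h : S ⊆ X.biUnion F) :
    ∃ x ∈ X, #S ≤ #X * #(F x) := by
  obtain ⟨x, hx, hmax⟩ := X.exists_max_image (fun y => #(F y)) hX
  refine ⟨x, hx, (card_le_card h).trans (card_biUnion_le.trans ?_)⟩
  calc ∑ y ∈ X, #(F y) ≤ ∑ _y ∈ X, #(F x) := sum_le_sum hmax
    _ = #X * #(F x) := by rw [sum_const, smul_eq_mul]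

end Finset

namespace IsTreeDecomp

variable {V T : Type} {G : SimpleGraph V} {Tr : SimpleGraph T} {B : T → Set V} {t t₁ t₂ : T}
  {a b v : V} {φ : V → T} {s : Finset V}

theorem reachableAvoiding_of_mem_bag (hd : IsTreeDecomp G Tr B) (hv : v ∉ B t)
    (h₁ : v ∈ B t₁) (h₂ : v ∈ B t₂) : Tr.ReachableAvoiding t t₁ t₂ := by
  obtain ⟨w, hw⟩ := (hd.bags_subtree v ⟨t₁, h₁⟩ ⟨t₂, h₂⟩).exists_walk_of_induce
  exact ⟨w, fun ht => hv (hw t ht)⟩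

theorem reachableAvoiding_of_walk (hd : IsTreeDecomp G Tr B) (w : G.Walk a b)
    (hw : ∀ x ∈ w.support, x ∉ B t) (ha : a ∈ B t₁) (hb : b ∈ B t₂) :
    Tr.ReachableAvoiding t t₁ t₂ := by
  induction w generalizing t₁ with
  | nil => exact hd.reachableAvoiding_of_mem_bag (hw _ (by simp)) ha hb
  | cons hadj w ih =>
    obtain ⟨s, has, hcs⟩ := hd.edges_in_bag _ _ hadj
    exact (hd.reachableAvoiding_of_mem_bag (hw _ (by simp)) ha has).trans
      (ih (fun x hx => hw x (by simp [hx])) hcs hb)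

theorem exists_mem_bag_isBetween (hd : IsTreeDecomp G Tr B) (hab : G.Reachable a b)
    (ha : a ∈ B t₁) (hb : b ∈ B t₂) (hsep : ¬Tr.ReachableAvoiding t t₁ t₂) :
    ∃ x ∈ B t, G.IsBetween x a b := by
  obtain ⟨w, hw⟩ := hab.exists_walk_length_eq_edist
  by_contra! h
  exact hsep (hd.reachableAvoiding_of_walk w
    (fun x hx hxt => h x hxt (w.isBetween_of_mem_support hw hx)) ha hb)

open scoped Classical

theorem exists_mem_bag_of_isCentroid (hd : IsTreeDecomp G Tr B) (hφ : ∀ v, v ∈ B (φ v))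
    (hs : (G.induce (s : Set V)).Connected) (ht : Tr.IsCentroid s φ t) :
    ∃ a ∈ s, a ∈ B t := by
  by_contra! h
  obtain ⟨⟨a, ha⟩⟩ := hs.nonempty
  have hC : ∀ b ∈ s, Tr.ReachableAvoiding t (φ a) (φ b) := fun b hb => by
    obtain ⟨w, hw⟩ := (hs ⟨a, ha⟩ ⟨b, hb⟩).exists_walk_of_induce
    exact hd.reachableAvoiding_of_walk w (fun x hx => h x (hw x hx)) (hφ a) (hφ b)
  have hCs := ht (φ a)
  rw [filter_true_of_mem hC] at hCs
  have : 0 < #s := card_pos.2 ⟨a, ha⟩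
  omega

theorem card_mul_self_le_two_mul_card_isBetween (hd : IsTreeDecomp G Tr B)
    (hφ : ∀ v, v ∈ B (φ v)) (hs : (G.induce (s : Set V)).Connected) (hs2 : 2 ≤ #s)
    (ht : Tr.IsCentroid s φ t) :
    #s * #s ≤ 2 * #{p ∈ s.offDiag | ∃ x ∈ B t, G.IsBetween x p.1 p.2} := by
  refine card_mul_self_le_two_mul_card_filter_offDiag (fun a b => ∃ x ∈ B t, G.IsBetween x a b)
    fun a ha => ?_
  by_cases hat : a ∈ B t
  · rw [filter_false_of_mem fun b _ hb => hb.2 ⟨a, hat, by simp [SimpleGraph.IsBetween]⟩]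
    simpa
  have haC : a ∈ {b ∈ s | Tr.ReachableAvoiding t (φ a) (φ b)} :=
    mem_filter.2 ⟨ha, .refl fun h => hat (h ▸ hφ a)⟩
  have hsub : {b ∈ s | b ≠ a ∧ ¬∃ x ∈ B t, G.IsBetween x a b} ⊆
      {b ∈ s | Tr.ReachableAvoiding t (φ a) (φ b)}.erase a := by
    intro b hb
    obtain ⟨hbs, hba, hsep⟩ := mem_filter.1 hb
    refine mem_erase.2 ⟨hba, mem_filter.2 ⟨hbs, ?_⟩⟩
    by_contra hav
    obtain ⟨w, -⟩ := (hs ⟨a, ha⟩ ⟨b, hbs⟩).exists_walk_of_induce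
    exact hsep (hd.exists_mem_bag_isBetween ⟨w⟩ (hφ a) (hφ b) hav)
  have hcard := card_le_card hsub
  rw [card_erase_of_mem haC] at hcard
  have := ht (φ a)
  omega

end IsTreeDecomp

open scoped Classical in
theorem btw_coe_finset {V : Type} (G : SimpleGraph V) (s : Finset V) (z : V) :
    btw G s z = #{p ∈ s.offDiag | G.IsBetween z p.1 p.2} / #s.offDiag := by
  have hnum : {p : V × V | p.1 ∈ (s : Set V) ∧ p.2 ∈ (s : Set V) ∧ p.1 ≠ p.2 ∧
      G.edist p.1 z + G.edist z p.2 = G.edist p.1 p.2} =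
      ↑{p ∈ s.offDiag | G.IsBetween z p.1 p.2} := by
    ext p
    rw [mem_coe, mem_filter, mem_offDiag, and_assoc, and_assoc]
    rfl
  have hden :
    {p : V × V | p.1 ∈ (s : Set V) ∧ p.2 ∈ (s : Set V) ∧ p.1 ≠ p.2} = ↑s.offDiag := by
    ext p
    rw [mem_coe, mem_offDiag]
    rfl
  rw [_root_.btw, hnum, hden, Set.ncard_coe_finset, Set.ncard_coe_finset]

open scoped Classical in
theorem one_div_le_btw {V : Type} {G : SimpleGraph V} {s : Finset V} {z : V} {c : ℕ}
    (hs : 2 ≤ #s) (h : #s * #s ≤ c * #{p ∈ s.offDiag | G.IsBetween z p.1 p.2}) :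
    1 / (c : ℝ) ≤ btw G s z := by
  have hoff : 0 < #s.offDiag := by rw [offDiag_card]; exact Nat.sub_pos_of_lt (by nlinarith)
  have hc : 0 < c := by
    rcases c.eq_zero_or_pos with rfl | hc
    · nlinarith
    · exact hc
  rw [btw_coe_finset, div_le_div_iff₀ (by exact_mod_cast hc) (by exact_mod_cast hoff), one_mul,
    mul_comm]
  exact_mod_cast (offDiag_card s ▸ Nat.sub_le _ _).trans h

theorem stmt2_general {V : Type} [Fintype V] (G : SimpleGraph V) [DecidableRel G.Adj]
    (Δ k : ℕ) (hΔ : ∀ v : V, G.degree v ≤ Δ)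
    (htl : TreelengthLE G k) (A : Set V) (hA : (G.induce A).Connected)
    (hA2 : 2 ≤ A.ncard) :
    ∃ v : V, (∃ a ∈ A, G.edist v a ≤ k) ∧
      btw G A v ≥ 1 / (2 * ((Δ : ℝ) ^ k + 1)) := by
  classical
  obtain ⟨T, Tr, B, hd, hbag⟩ := htl
  choose φ hφ using hd.bags_cover
  obtain ⟨s, rfl⟩ : ∃ s : Finset V, ↑s = A := ⟨A.toFinite.toFinset, by simp⟩
  rw [Set.ncard_coe_finset] at hA2
  obtain ⟨t, ht⟩ := hd.tree_acyclic.exists_isCentroid hd.tree_connected s φ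
  obtain ⟨a, has, hat⟩ := hd.exists_mem_bag_of_isCentroid hφ hA ht
  have hbag_card : #{v | v ∈ B t} ≤ Δ ^ k + 1 :=
    (card_le_card fun v hv => by simpa using hbag t a hat v (by simpa using hv)).trans
      (card_edist_le_le_pow_add_one hΔ a k)
  obtain ⟨x, hxt, hx⟩ := exists_card_le_card_mul_card_of_subset_biUnion
    (X := {v | v ∈ B t}) (S := {p ∈ s.offDiag | ∃ x ∈ B t, G.IsBetween x p.1 p.2})
    (F := fun x => {p ∈ s.offDiag | G.IsBetween x p.1 p.2}) ⟨a, by simpa using hat⟩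
    fun p hp => by
      obtain ⟨hp, x, hxt, hx⟩ := mem_filter.1 hp
      exact mem_biUnion.2 ⟨x, by simpa using hxt, mem_filter.2 ⟨hp, hx⟩⟩
  refine ⟨x, ⟨a, has, hbag t x (by simpa using hxt) a hat⟩, ?_⟩
  have hpairs := hd.card_mul_self_le_two_mul_card_isBetween hφ hA hA2 ht
  have hcount : #s * #s ≤ 2 * (Δ ^ k + 1) * #{p ∈ s.offDiag | G.IsBetween x p.1 p.2} :=
    calc #s * #s ≤ 2 * (#{v | v ∈ B t} * #{p ∈ s.offDiag | G.IsBetween x p.1 p.2}) :=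
          hpairs.trans (Nat.mul_le_mul_left 2 (by convert hx))
      _ ≤ 2 * (Δ ^ k + 1) * #{p ∈ s.offDiag | G.IsBetween x p.1 p.2} := by
          rw [mul_assoc]; gcongr
  exact_mod_cast one_div_le_btw hA2 hcount

theorem stmt2 {V : Type} [Fintype V] (G : SimpleGraph V) [DecidableRel G.Adj]
    (Δ k : ℕ) (hΔ : ∀ v : V, G.degree v ≤ Δ) (hG : G.Connected)
    (htl : TreelengthLE G k) (A : Set V) (hA : (G.induce A).Connected)
    (hA2 : 2 ≤ A.ncard) :
    ∃ v : V, (∃ a ∈ A, G.edist v a ≤ k) ∧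
      btw G A v ≥ 1 / (2 * ((Δ : ℝ) ^ k + 1)) :=
  stmt2_general G Δ k hΔ htl A hA hA2
end

section
/- Let G be a graph, A ⊆ V(G) a set such that G[A] is connected, and let S ⊆ V(G) be a set of vertices with d_G(z, C) > 3k/2 for a connected component C of G[V(G) \ N^{≤3k/2}[z]], where G has treelength at most k. Then for any pair of vertices u, v ∈ C ∩ A, no shortest path in G between u and v passes through z. -/
open SimpleGraph

/-!
Let `W` be a walk from `u` to `v` inside `C`, so every vertex of `W` is at distance more
than `3k/2` from `z`, and let `P`, `Q` be shortest walks `u → z` and `z → v`. In a tree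
decomposition the nodes whose bags meet a walk form a subtree; the subtrees of `W`, `P` and `Q`
pairwise intersect, so some bag meets all three, at `x ∈ W`, `w₁ ∈ P`, `w₂ ∈ Q`. If `z` lay on
a shortest `u`–`v` path, then `d(w₁, z) + d(z, w₂) = d(w₁, w₂) ≤ k`, and hence
`2 d(x, z) ≤ d(x, w₁) + d(w₁, z) + d(x, w₂) + d(w₂, z) ≤ 3k`, a contradiction.
-/

namespace SimpleGraph

variable {V : Type*} {G : SimpleGraph V}

theorem exists_walk_of_reachable_induce {s : Set V} {a b : s} (h : (G.induce s).Reachable a b) :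
    ∃ p : G.Walk a b, ∀ x ∈ p.support, x ∈ s := by
  obtain ⟨q⟩ := h
  have hq := Walk.support_map (Embedding.induce s).toHom q
  refine ⟨q.map (Embedding.induce s).toHom, fun x hx => ?_⟩
  obtain ⟨y, -, rfl⟩ := List.mem_map.mp (hq ▸ hx)
  exact y.2

theorem Walk.IsPath.append {u v w : V} {p : G.Walk u v} {q : G.Walk v w} (hp : p.IsPath)
    (hq : q.IsPath) (h : ∀ x ∈ p.support, x ∈ q.support → x = v) : (p.append q).IsPath := by
  have hq' := hq.support_nodup
  rw [← Walk.cons_tail_support q] at hq'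
  rw [Walk.isPath_def, Walk.support_append]
  refine List.Nodup.append hp.support_nodup (List.nodup_cons.mp hq').2 fun x hxp hxq => ?_
  obtain rfl := h x hxp (List.mem_of_mem_tail hxq)
  exact (List.nodup_cons.mp hq').1 hxq

theorem Walk.edist_add_edist_eq_of_mem_support {u v w : V} {p : G.Walk u v}
    (hp : (p.length : ℕ∞) = G.edist u v) (hw : w ∈ p.support) :
    G.edist u w + G.edist w v = G.edist u v := by
  classical
  refine le_antisymm ?_ G.edist_triangle
  calc G.edist u w + G.edist w v
      ≤ (p.takeUntil w hw).length + (p.dropUntil w hw).length :=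
        add_le_add (edist_le _) (edist_le _)
    _ = G.edist u v := by
      rw [← hp, ← Nat.cast_add, ← Walk.length_append, Walk.take_spec]

-- `g` is the vertex of `U` closest to `t₀`: the path from `t₀` to `g` followed by a path
-- inside `U` is a path, hence the unique one from `t₀` to `a`.
theorem IsTree.exists_gate {T : Type*} {Tr : SimpleGraph T} (hT : Tr.IsTree) {U : Set T}
    (hU : (Tr.induce U).Preconnected) (hne : U.Nonempty) (t₀ : T) :
    ∃ g ∈ U, ∀ a ∈ U, ∀ q : Tr.Walk a t₀, g ∈ q.support := by
  classical
  set g := Function.argminOn (Tr.dist t₀) U hne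
  have hgU : g ∈ U := Function.argminOn_mem _ U hne
  refine ⟨g, hgU, fun a haU q => ?_⟩
  obtain ⟨P, hPpath, hPlen⟩ := hT.connected.exists_path_of_dist t₀ g
  have hPU : ∀ r ∈ P.support, r ∈ U → r = g := by
    intro r hr hrU
    have hmin : Tr.dist t₀ g ≤ Tr.dist t₀ r := Function.argminOn_le _ U hrU
    have hsplit := congrArg Walk.length (P.take_spec hr)
    rw [Walk.length_append] at hsplit
    have htake := Tr.dist_le (P.takeUntil r hr)
    exact Walk.eq_of_length_eq_zero (p := P.dropUntil r hr) (by omega)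
  obtain ⟨R, hRU⟩ := exists_walk_of_reachable_induce (hU ⟨g, hgU⟩ ⟨a, haU⟩)
  have hpath : (P.append R.bypass).IsPath :=
    hPpath.append R.bypass_isPath fun r hrP hrR =>
      hPU r hrP (hRU r (R.support_bypass_subset_support hrR))
  have huniq :=
    (hT.isAcyclic.subsingleton_path t₀ a).elim ⟨_, hpath⟩ ⟨_, q.reverse.bypass_isPath⟩
  have hg : g ∈ q.reverse.bypass.support := by
    rw [← congrArg (fun p : Tr.Path t₀ a => p.1.support) huniq]
    exact Walk.mem_support_append_iff _ _ |>.mpr (Or.inl P.end_mem_support)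
  simpa using q.reverse.support_bypass_subset_support hg

theorem edist_add_edist_eq_of_between {u v z w₁ w₂ : V} (huv : G.edist u v ≠ ⊤)
    (hz : G.edist u z + G.edist z v = G.edist u v)
    (hw₁ : G.edist u w₁ + G.edist w₁ z = G.edist u z)
    (hw₂ : G.edist z w₂ + G.edist w₂ v = G.edist z v) :
    G.edist w₁ z + G.edist z w₂ = G.edist w₁ w₂ := by
  refine le_antisymm ?_ G.edist_triangle
  have hsum : G.edist u w₁ + (G.edist w₁ z + G.edist z w₂) + G.edist w₂ v = G.edist u v := by
    rw [← hz, ← hw₁, ← hw₂]; ring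
  have hle : G.edist u v ≤ G.edist u w₁ + G.edist w₁ w₂ + G.edist w₂ v :=
    G.edist_triangle.trans (add_le_add_left G.edist_triangle _)
  rw [← hsum] at huv hle
  have hfin₁ : G.edist u w₁ ≠ ⊤ := fun h => huv (by simp [h])
  have hfin₂ : G.edist w₂ v ≠ ⊤ := fun h => huv (by simp [h])
  exact (ENat.add_le_add_iff_right hfin₂).mp hle |> (ENat.add_le_add_iff_left hfin₁).mp

theorem two_mul_edist_le_three_mul {x z w₁ w₂ : V} {k : ℕ∞} (h₁ : G.edist x w₁ ≤ k)
    (h₂ : G.edist x w₂ ≤ k) (h : G.edist w₁ z + G.edist z w₂ ≤ k) :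
    2 * G.edist x z ≤ 3 * k := by
  calc 2 * G.edist x z = G.edist x z + G.edist x z := two_mul _
    _ ≤ (G.edist x w₁ + G.edist w₁ z) + (G.edist x w₂ + G.edist w₂ z) :=
        add_le_add G.edist_triangle G.edist_triangle
    _ = G.edist x w₁ + G.edist x w₂ + (G.edist w₁ z + G.edist z w₂) := by
        rw [G.edist_comm (u := w₂)]; ring
    _ ≤ k + k + k := by gcongr
    _ = 3 * k := by ring

end SimpleGraph

namespace IsTreeDecomp

variable {V T : Type} {G : SimpleGraph V} {Tr : SimpleGraph T} {B : T → Set V}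

theorem connected_induce_bags_meeting (D : IsTreeDecomp G Tr B) {a b : V} (p : G.Walk a b) :
    (Tr.induce {t | ∃ w ∈ p.support, w ∈ B t}).Connected := by
  induction p with
  | @nil x =>
    have hbags : {t | ∃ w ∈ (Walk.nil : G.Walk x x).support, w ∈ B t} = {t | x ∈ B t} := by
      ext; simp
    exact hbags ▸ D.bags_subtree x
  | @cons x y _ hxy p ih =>
    obtain ⟨t, hxt, hyt⟩ := D.edges_in_bag x y hxy
    have hunion : {t | ∃ w ∈ (Walk.cons hxy p).support, w ∈ B t} =
        {t | x ∈ B t} ∪ {t | ∃ w ∈ p.support, w ∈ B t} := by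
      ext; simp
    rw [hunion]
    exact induce_union_connected (D.bags_subtree x).preconnected ih.preconnected
      ⟨t, hxt, y, p.start_mem_support, hyt⟩

theorem exists_bag_meeting_triangle (D : IsTreeDecomp G Tr B) {u v z : V} (W : G.Walk u v)
    (P : G.Walk u z) (Q : G.Walk z v) :
    ∃ t, (∃ x ∈ W.support, x ∈ B t) ∧ (∃ x ∈ P.support, x ∈ B t) ∧
      (∃ x ∈ Q.support, x ∈ B t) := by
  obtain ⟨tu, htu⟩ := D.bags_cover u
  obtain ⟨tv, htv⟩ := D.bags_cover v
  obtain ⟨tz, htz⟩ := D.bags_cover z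
  obtain ⟨g, hgW, hgate⟩ := IsTree.exists_gate ⟨D.tree_connected, D.tree_acyclic⟩
    (D.connected_induce_bags_meeting W).preconnected ⟨tu, u, W.start_mem_support, htu⟩ tz
  refine ⟨g, hgW, ?_, ?_⟩
  · obtain ⟨q, hq⟩ := exists_walk_of_reachable_induce <|
      (D.connected_induce_bags_meeting P).preconnected
        ⟨tu, u, P.start_mem_support, htu⟩ ⟨tz, z, P.end_mem_support, htz⟩
    exact hq g (hgate tu ⟨u, W.start_mem_support, htu⟩ q)
  · obtain ⟨q, hq⟩ := exists_walk_of_reachable_induce <|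
      (D.connected_induce_bags_meeting Q).preconnected
        ⟨tv, v, Q.end_mem_support, htv⟩ ⟨tz, z, Q.start_mem_support, htz⟩
    exact hq g (hgate tv ⟨v, W.end_mem_support, htv⟩ q)

end IsTreeDecomp

theorem stmt6_general {V : Type} (G : SimpleGraph V) (k : ℕ)
    (htl : TreelengthLE G k) (A : Set V) (z : V)
    (C : (G.induce {v : V | 2 * G.edist v z ≤ 3 * k}ᶜ).ConnectedComponent)
    (u v : V) (hu : u ∈ Subtype.val '' C.supp ∩ A)
    (hv : v ∈ Subtype.val '' C.supp ∩ A) :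
    ¬ (G.edist u z + G.edist z v = G.edist u v) := by
  intro hz
  obtain ⟨T, Tr, B, D, hk⟩ := htl
  obtain ⟨⟨u, huC, rfl⟩, -⟩ := hu
  obtain ⟨⟨v, hvC, rfl⟩, -⟩ := hv
  obtain ⟨W, hW⟩ :=
    exists_walk_of_reachable_induce (ConnectedComponent.exact (huC.trans hvC.symm))
  have huv : G.edist u v ≠ ⊤ := edist_ne_top_iff_reachable.mpr W.reachable
  obtain ⟨P, hP⟩ := exists_walk_of_edist_ne_top (ne_top_of_le_ne_top huv (hz ▸ le_self_add))
  obtain ⟨Q, hQ⟩ := exists_walk_of_edist_ne_top (ne_top_of_le_ne_top huv (hz ▸ le_add_self))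
  obtain ⟨t, ⟨x, hxW, hxt⟩, ⟨w₁, hw₁P, hw₁t⟩, ⟨w₂, hw₂Q, hw₂t⟩⟩ :=
    D.exists_bag_meeting_triangle W P Q
  refine hW x hxW (two_mul_edist_le_three_mul (hk t x hxt w₁ hw₁t) (hk t x hxt w₂ hw₂t) ?_)
  rw [edist_add_edist_eq_of_between huv hz (P.edist_add_edist_eq_of_mem_support hP hw₁P)
    (Q.edist_add_edist_eq_of_mem_support hQ hw₂Q)]
  exact hk t w₁ hw₁t w₂ hw₂t

theorem stmt6 {V : Type} (G : SimpleGraph V) (k : ℕ) (hG : G.Connected)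
    (htl : TreelengthLE G k) (A : Set V) (hA : (G.induce A).Connected) (z : V)
    (C : (G.induce {v : V | 2 * G.edist v z ≤ 3 * k}ᶜ).ConnectedComponent)
    (u v : V) (hu : u ∈ Subtype.val '' C.supp ∩ A)
    (hv : v ∈ Subtype.val '' C.supp ∩ A) :
    ¬ (G.edist u z + G.edist z v = G.edist u v) :=
  stmt6_general G k htl A z C u v hu hv
end

section
/- Let G be a connected graph of treelength at most k ≥ 1, and let C be a cycle in G that is geodesic (d_C(x,y) = d_G(x,y) for all x,y ∈ C). If P is one of the two arcs of C between two vertices a,b ∈ C and P is a shortest a–b path in G, then the other arc of C is contained in N^{≤3k/2}[P]. -/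
open SimpleGraph


private lemma aux_side_step {T : Type} {Tr : SimpleGraph T} {w w' : T} :
    ∀ {t1 t2 : T}, Tr.Walk t1 t2 →
    ((Tr.deleteEdges {s(w, w')}).Reachable t2 w ∨ (Tr.deleteEdges {s(w, w')}).Reachable t2 w') →
    ((Tr.deleteEdges {s(w, w')}).Reachable t1 w ∨ (Tr.deleteEdges {s(w, w')}).Reachable t1 w') := by
  intro t1 t2 W
  induction W with
  | nil => exact id
  | @cons t t2 _ hadj p ih =>
      intro hend
      by_cases he : s(t, t2) = s(w, w')
      · rcases Sym2.eq_iff.mp he with ⟨rfl, rfl⟩ | ⟨rfl, rfl⟩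
        · exact Or.inl (Reachable.refl _)
        · exact Or.inr (Reachable.refl _)
      · have hadj' : (Tr.deleteEdges {s(w, w')}).Adj t t2 :=
          SimpleGraph.deleteEdges_adj.mpr ⟨hadj, by simpa using he⟩
        rcases ih hend with h | h
        · exact Or.inl (hadj'.reachable.trans h)
        · exact Or.inr (hadj'.reachable.trans h)

private lemma aux_side_total {T : Type} {Tr : SimpleGraph T} {w w' t : T} (W : Tr.Walk t w) :
    (Tr.deleteEdges {s(w, w')}).Reachable t w ∨ (Tr.deleteEdges {s(w, w')}).Reachable t w' :=
  aux_side_step W (Or.inl (Reachable.refl _))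

private lemma aux_not_reach {T : Type} {Tr : SimpleGraph T} (hac : Tr.IsAcyclic) {w w' : T}
    (hadj : Tr.Adj w w') : ¬ (Tr.deleteEdges {s(w, w')}).Reachable w w' := by
  have hb := SimpleGraph.isAcyclic_iff_forall_adj_isBridge.mp hac hadj
  exact SimpleGraph.isBridge_iff.mp hb

private lemma aux_edge_mem {T : Type} {Tr : SimpleGraph T} {w w' t1 t2 : T} (W : Tr.Walk t1 t2)
    (h : ¬ (Tr.deleteEdges {s(w, w')}).Reachable t1 t2) : w ∈ W.support ∧ w' ∈ W.support := by
  by_cases he : s(w, w') ∈ W.edges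
  · exact ⟨W.fst_mem_support_of_mem_edges he, W.snd_mem_support_of_mem_edges he⟩
  · exact absurd ⟨W.toDeleteEdges {s(w, w')} (by
      intro e hee hes
      rw [Set.mem_singleton_iff] at hes
      exact he (hes ▸ hee))⟩ h

private lemma aux_induce_walk {T : Type} {Tr : SimpleGraph T} {S : Set T}
    (hconn : (Tr.induce S).Connected) {t1 t2 : T} (h1 : t1 ∈ S) (h2 : t2 ∈ S) :
    ∃ W : Tr.Walk t1 t2, ∀ s ∈ W.support, s ∈ S := by
  obtain ⟨W⟩ := hconn.preconnected ⟨t1, h1⟩ ⟨t2, h2⟩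
  let f : Tr.induce S →g Tr := ⟨Subtype.val, fun {p q} h => by simpa using h⟩
  refine ⟨W.map f, ?_⟩
  intro s hs
  rw [SimpleGraph.Walk.support_map] at hs
  obtain ⟨⟨s', hs'⟩, _, rfl⟩ := List.mem_map.mp hs
  exact hs'

private lemma aux_path_inj {T : Type} {Tr : SimpleGraph T} :
    ∀ {u v : T} {p : Tr.Walk u v}, p.IsPath → ∀ i j, i ≤ p.length → j ≤ p.length →
      p.getVert i = p.getVert j → i = j := by
  intro u v p
  induction p with
  | nil => intro _ i j hi hj _; simp at hi hj; omega
  | @cons u u2 v hadj p ih =>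
    intro hp i j hi hj heq
    rw [SimpleGraph.Walk.cons_isPath_iff] at hp
    match i, j with
    | 0, 0 => rfl
    | 0, j + 1 =>
      exfalso
      rw [SimpleGraph.Walk.getVert_zero, SimpleGraph.Walk.getVert_cons_succ] at heq
      exact hp.2 (SimpleGraph.Walk.mem_support_iff_exists_getVert.mpr
        ⟨j, heq.symm, by simpa using hj⟩)
    | i + 1, 0 =>
      exfalso
      rw [SimpleGraph.Walk.getVert_zero, SimpleGraph.Walk.getVert_cons_succ] at heq
      exact hp.2 (SimpleGraph.Walk.mem_support_iff_exists_getVert.mpr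
        ⟨i, heq, by simpa using hi⟩)
    | i + 1, j + 1 =>
      rw [SimpleGraph.Walk.getVert_cons_succ, SimpleGraph.Walk.getVert_cons_succ] at heq
      have := ih hp.1 i j (by simpa using hi) (by simpa using hj) heq
      omega

set_option maxHeartbeats 2000000 in
private lemma aux_arith_switch (k L nP ix c1I c2I c1II c2II : ℕ)
    (hk : 1 ≤ k)
    (h1 : nP ≤ c1I) (h2 : c1I < ix) (h3 : ix < c2I) (h4 : c2I ≤ L)
    (h5 : nP ≤ c1II) (h6 : c1II < ix) (h7 : ix < c2II) (h8 : c2II ≤ L)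
    (hTI : c2I - c1I ≤ k)
    (hTII : L - (c2II - c1II) ≤ k)
    (hX1 : 3 * k < 2 * (ix - nP)) (hX2 : 3 * k < 2 * (L - ix))
    (hp1 : min ((c1II - c1I) + (c1I - c1II)) (L - ((c1II - c1I) + (c1I - c1II))) ≤ k)
    (hp2 : min ((c2II - c2I) + (c2I - c2II)) (L - ((c2II - c2I) + (c2I - c2II))) ≤ k)
    (hp3 : min ((c1II - c2I) + (c2I - c1II)) (L - ((c1II - c2I) + (c2I - c1II))) ≤ k) :
    False := by omega

private lemma aux_arith_jX (k L nP ix c1 c2 : ℕ)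
    (hk : 1 ≤ k)
    (h1 : nP ≤ c1) (h2 : c1 < ix) (h3 : ix < c2) (h4 : c2 ≤ L)
    (hxc1 : min (ix - c1) (L - (ix - c1)) ≤ k)
    (hxc2 : min (c2 - ix) (L - (c2 - ix)) ≤ k)
    (hd : min (c2 - c1) (L - (c2 - c1)) ≤ k)
    (hII : k < c2 - c1)
    (hX1 : 3 * k < 2 * (ix - nP)) (hX2 : 3 * k < 2 * (L - ix)) :
    False := by omega

private lemma aux_arith_direct (k L nP ix c1 c2 : ℕ)
    (hk : 1 ≤ k)
    (h1 : nP ≤ c1) (h2 : c1 < ix) (h3 : ix < c2) (h4 : c2 ≤ L)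
    (hTI : c2 - c1 ≤ k)
    (h9 : 3 * k < 2 * (min (ix - c1) (L - (ix - c1)) + k))
    (h10 : 3 * k < 2 * (min (c2 - ix) (L - (c2 - ix)) + k)) :
    False := by omega

set_option maxHeartbeats 2000000 in
theorem stmt17 {V : Type} (G : SimpleGraph V) (k : ℕ) (hk : 1 ≤ k)
    (hG : G.Connected) (htl : TreelengthLE G k) (a b : V)
    (P Q : G.Walk a b) (hcyc : (P.append Q.reverse).IsCycle)
    (hgeo : ∀ i j : ℕ, i ≤ j → j ≤ (P.append Q.reverse).length →
      G.edist ((P.append Q.reverse).getVert i) ((P.append Q.reverse).getVert j) =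
        ((min (j - i) ((P.append Q.reverse).length - (j - i)) : ℕ) : ℕ∞))
    (hP : P.length = G.dist a b) :
    ∀ x ∈ Q.support, ∃ y ∈ P.support, 2 * G.edist x y ≤ 3 * k := by
  classical
  intro x hxQ
  by_contra hcon
  push_neg at hcon
  obtain ⟨TT, Tr, B, hdec, hbag⟩ := htl
  obtain ⟨htc, hac, hcov, hsub, hedge⟩ := hdec
  set C := P.append Q.reverse with hC
  set L := C.length with hLdef
  set nP := P.length with hnP
  have hL : L = nP + Q.length := by
    rw [hLdef, hC, SimpleGraph.Walk.length_append, SimpleGraph.Walk.length_reverse]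
  -- x is not on P
  have hxP : x ∉ P.support := by
    intro h
    have h1 := hcon x h
    rw [SimpleGraph.edist_self] at h1
    simp at h1
  -- position of x on the cycle
  obtain ⟨iQ, hxi, hiQ⟩ := SimpleGraph.Walk.mem_support_iff_exists_getVert.mp
    (show x ∈ Q.reverse.support by rw [SimpleGraph.Walk.support_reverse]; exact List.mem_reverse.mpr hxQ)
  rw [SimpleGraph.Walk.length_reverse] at hiQ
  set ix := nP + iQ with hixdef
  have hixL : ix ≤ L := by omega
  have hvx : C.getVert ix = x := by
    rw [hC, SimpleGraph.Walk.getVert_append]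
    simp only [hixdef]
    rw [if_neg (by omega)]
    simpa [show nP + iQ - P.length = iQ by omega] using hxi
  have hv0 : C.getVert 0 = a := SimpleGraph.Walk.getVert_zero _
  have hvL : C.getVert L = a := SimpleGraph.Walk.getVert_length _
  have hvb : C.getVert nP = b := by
    rw [hC, SimpleGraph.Walk.getVert_append, if_neg (by omega)]
    simpa [show nP - P.length = 0 by omega] using SimpleGraph.Walk.getVert_zero Q.reverse
  -- vertices at positions ≤ nP are on P
  have hposP : ∀ c, c ≤ nP → C.getVert c ∈ P.support := by
    intro c hc
    rw [hC, SimpleGraph.Walk.getVert_append]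
    split_ifs with h
    · exact SimpleGraph.Walk.mem_support_iff_exists_getVert.mpr ⟨c, rfl, hc⟩
    · have hceq : c - nP = 0 := by omega
      rw [hceq, SimpleGraph.Walk.getVert_zero]
      exact SimpleGraph.Walk.end_mem_support P
  -- numeric form of hgeo
  have hEd : ∀ i j, i ≤ j → j ≤ L → G.edist (C.getVert i) (C.getVert j) =
      ((min (j - i) (L - (j - i)) : ℕ) : ℕ∞) := hgeo
  -- numeric negation facts
  have hNeg : ∀ iy, iy ≤ nP → 3 * k < 2 * (min (ix - iy) (L - (ix - iy))) := by
    intro iy hiy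
    have h1 := hcon (C.getVert iy) (hposP iy hiy)
    rw [SimpleGraph.edist_comm, ← hvx, hEd iy ix (by omega) hixL] at h1
    exact_mod_cast h1
  have hXa := hNeg 0 (by omega)
  have hXb := hNeg nP le_rfl
  have hX1 : 3 * k < 2 * (ix - nP) := by omega
  have hX2 : 3 * k < 2 * (L - ix) := by omega
  have hnPix : nP < ix := by omega
  have hixLlt : ix < L := by omega
  -- tree setup
  obtain ⟨tx, htx⟩ := hcov x
  obtain ⟨tb0, htb0⟩ := hcov b
  obtain ⟨W0⟩ := htc.preconnected tx tb0
  set pp := W0.toPath.val with hppdef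
  have hpath : pp.IsPath := W0.toPath.property
  set M := pp.length with hMdef
  set n := fun m => pp.getVert m with hndef
  have hn0 : n 0 = tx := SimpleGraph.Walk.getVert_zero _
  have hnM : n M = tb0 := SimpleGraph.Walk.getVert_length _
  have hinj : ∀ i j, i ≤ M → j ≤ M → n i = n j → i = j := fun i j hi hj he =>
    aux_path_inj hpath i j hi hj he
  -- first node whose bag meets P
  have hexA : ∃ m, ∃ y ∈ P.support, y ∈ B (n m) :=
    ⟨M, b, SimpleGraph.Walk.end_mem_support P, by rw [hnM]; exact htb0⟩
  set jA := Nat.find hexA with hjAdef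
  obtain ⟨y0, hy0P, hy0⟩ := Nat.find_spec hexA
  have hjAmin : ∀ m, m < jA → ∀ y ∈ P.support, y ∉ B (n m) := by
    intro m hm y hy hmem
    exact Nat.find_min hexA hm ⟨y, hy, hmem⟩
  have hjAM : jA ≤ M := Nat.find_le ⟨b, SimpleGraph.Walk.end_mem_support P, by rw [hnM]; exact htb0⟩
  by_cases hxA : x ∈ B (n jA)
  · have h1 := hbag (n jA) x hxA y0 hy0
    have h2 := hcon y0 hy0P
    have h3 : (3 * k : ℕ∞) < 2 * k :=
      lt_of_lt_of_le h2 (by exact mul_le_mul_right h1 2)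
    have h4 : 3 * k < 2 * k := by exact_mod_cast h3
    omega
  · -- last node (from x's end) whose bag contains x, before jA
    set jX := Nat.findGreatest (fun m => x ∈ B (n m)) jA with hjXdef
    have hjX_spec : x ∈ B (n jX) :=
      Nat.findGreatest_spec (P := fun m => x ∈ B (n m)) (Nat.zero_le jA)
        (show x ∈ B (n 0) by rw [hn0]; exact htx)
    have hjXle : jX ≤ jA := Nat.findGreatest_le jA
    have hjXlt : jX < jA := by
      rcases lt_or_eq_of_le hjXle with h | h
      · exact h
      · exact absurd (h ▸ hjX_spec) hxA
    have hxnot : ∀ m', jX < m' → m' ≤ jA → x ∉ B (n m') := by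
      intro m' h1 h2 hmem
      exact absurd (Nat.le_findGreatest (P := fun m => x ∈ B (n m)) h2 hmem) (by omega)
    -- crossing points of the cycle for each tree edge between jX and jA
    have hcross : ∀ m, ∃ c1 c2, jX ≤ m → m < jA →
        ((nP ≤ c1 ∧ c1 < ix ∧ C.getVert c1 ∈ B (n m) ∧ C.getVert c1 ∈ B (n (m+1))) ∧
         (ix < c2 ∧ c2 ≤ L ∧ C.getVert c2 ∈ B (n m) ∧ C.getVert c2 ∈ B (n (m+1)))) := by
      intro m
      by_cases hm : jX ≤ m ∧ m < jA
      case neg => exact ⟨0, 0, fun h1 h2 => absurd ⟨h1, h2⟩ hm⟩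
      obtain ⟨hm1, hm2⟩ := hm
      have hmM : m < M := lt_of_lt_of_le hm2 hjAM
      have hadjww : Tr.Adj (n m) (n (m+1)) := pp.adj_getVert_succ hmM
      -- reachability chains in the tree minus the edge (n m, n (m+1))
      have hchain : ∀ i d, i + d ≤ M → (∀ l, i ≤ l → l < i + d → l ≠ m) →
          (Tr.deleteEdges {s(n m, n (m+1))}).Reachable (n i) (n (i + d)) := by
        intro i d
        induction d with
        | zero => intro _ _; exact Reachable.refl _
        | succ d ih =>
          intro hM2 hl
          have h1 := ih (by omega) (fun l al bl => hl l al (by omega))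
          have hadj0 : Tr.Adj (n (i + d)) (n (i + d + 1)) := pp.adj_getVert_succ (by omega)
          have hne : i + d ≠ m := hl (i + d) (by omega) (by omega)
          have hedgene : s(n (i + d), n (i + d + 1)) ≠ s(n m, n (m + 1)) := by
            intro hsym
            rcases Sym2.eq_iff.mp hsym with ⟨ha1, hb1⟩ | ⟨ha1, hb1⟩
            · exact hne (hinj _ _ (by omega) (by omega) ha1)
            · have e1 := hinj _ _ (by omega) (by omega) ha1
              have e2 := hinj _ _ (by omega) (by omega) hb1
              omega
          have hadj' : (Tr.deleteEdges {s(n m, n (m+1))}).Adj (n (i + d)) (n (i + d + 1)) :=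
            SimpleGraph.deleteEdges_adj.mpr ⟨hadj0, by simpa using hedgene⟩
          exact h1.trans hadj'.reachable
      have hreach_x : (Tr.deleteEdges {s(n m, n (m+1))}).Reachable (n jX) (n m) := by
        have := hchain jX (m - jX) (by omega) (fun l al bl => by omega)
        rwa [show jX + (m - jX) = m from by omega] at this
      have hreach_b : (Tr.deleteEdges {s(n m, n (m+1))}).Reachable (n M) (n (m+1)) := by
        have := hchain (m+1) (M - (m+1)) (by omega) (fun l al bl => by omega)
        rw [show m + 1 + (M - (m+1)) = M from by omega] at this
        exact this.symm
      have hside : ∀ t, (Tr.deleteEdges {s(n m, n (m+1))}).Reachable t (n m) ∨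
          (Tr.deleteEdges {s(n m, n (m+1))}).Reachable t (n (m+1)) := fun t =>
        aux_side_total (htc.preconnected t (n m)).some
      have hmerge : ∀ z : V,
          (∃ t1, z ∈ B t1 ∧ (Tr.deleteEdges {s(n m, n (m+1))}).Reachable t1 (n m)) →
          (∃ t2, z ∈ B t2 ∧ (Tr.deleteEdges {s(n m, n (m+1))}).Reachable t2 (n (m+1))) →
          z ∈ B (n m) ∧ z ∈ B (n (m+1)) := by
        rintro z ⟨t1, hz1, hr1⟩ ⟨t2, hz2, hr2⟩
        obtain ⟨W2, hW2⟩ := aux_induce_walk (hsub z) hz1 hz2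
        have hnr : ¬ (Tr.deleteEdges {s(n m, n (m+1))}).Reachable t1 t2 := by
          intro hr
          exact aux_not_reach hac hadjww (hr1.symm.trans (hr.trans hr2))
        obtain ⟨hw1, hw2⟩ := aux_edge_mem W2 hnr
        exact ⟨hW2 _ hw1, hW2 _ hw2⟩
      have hxnotS : ¬(x ∈ B (n m) ∧ x ∈ B (n (m+1))) := fun hS =>
        hxnot (m+1) (by omega) (by omega) hS.2
      have hAnotS : ∀ y ∈ P.support, ¬(y ∈ B (n m) ∧ y ∈ B (n (m+1))) := fun y hy hS =>
        hjAmin m hm2 y hy hS.1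
      -- propagation step along G-edges
      have hstep : ∀ z z2 : V, G.Adj z z2 →
          (∃ t, z ∈ B t ∧ (Tr.deleteEdges {s(n m, n (m+1))}).Reachable t (n (m+1))) →
          ¬(z ∈ B (n m) ∧ z ∈ B (n (m+1))) →
          (∃ t, z2 ∈ B t ∧ (Tr.deleteEdges {s(n m, n (m+1))}).Reachable t (n (m+1))) := by
        rintro z z2 hzadj ⟨t2, hzt2, hrt2⟩ hzS
        obtain ⟨t0, hzt0, hz2t0⟩ := hedge z z2 hzadj
        rcases hside t0 with h | h
        · exact absurd (hmerge z ⟨t0, hzt0, h⟩ ⟨t2, hzt2, hrt2⟩) hzS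
        · exact ⟨t0, hz2t0, h⟩
      have hAsideb : ∃ t, b ∈ B t ∧ (Tr.deleteEdges {s(n m, n (m+1))}).Reachable t (n (m+1)) :=
        ⟨n M, by rw [hnM]; exact htb0, hreach_b⟩
      -- a is on the A side
      have hAsidea : ∃ t, a ∈ B t ∧ (Tr.deleteEdges {s(n m, n (m+1))}).Reachable t (n (m+1)) := by
        have key : ∀ d, d ≤ nP →
            ∃ t, C.getVert (nP - d) ∈ B t ∧
              (Tr.deleteEdges {s(n m, n (m+1))}).Reachable t (n (m+1)) := by
          intro d
          induction d with
          | zero => intro _; rw [Nat.sub_zero, hvb]; exact hAsideb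
          | succ d ih =>
            intro hd
            have h1 := ih (by omega)
            have hadj2 : G.Adj (C.getVert (nP - d - 1)) (C.getVert (nP - d)) := by
              have h3 := C.adj_getVert_succ (i := nP - d - 1) (by omega)
              rwa [show nP - d - 1 + 1 = nP - d from by omega] at h3
            have h2 := hstep _ _ hadj2.symm h1 (hAnotS _ (hposP _ (by omega)))
            rwa [show nP - d - 1 = nP - (d+1) from by omega] at h2
        have h1 := key nP le_rfl
        rwa [Nat.sub_self, hv0] at h1
      -- crossing on the b-to-x stretch
      have hcr1 : ∃ c, nP ≤ c ∧ c < ix ∧ C.getVert c ∈ B (n m) ∧ C.getVert c ∈ B (n (m+1)) := by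
        by_contra hno
        push_neg at hno
        have key : ∀ t, t ≤ iQ →
            ∃ t', C.getVert (nP + t) ∈ B t' ∧
              (Tr.deleteEdges {s(n m, n (m+1))}).Reachable t' (n (m+1)) := by
          intro t
          induction t with
          | zero => intro _; rw [Nat.add_zero, hvb]; exact hAsideb
          | succ t ih =>
            intro ht
            have h1 := ih (by omega)
            have hadj2 : G.Adj (C.getVert (nP + t)) (C.getVert (nP + t + 1)) :=
              C.adj_getVert_succ (by omega)
            have hnotS : ¬(C.getVert (nP + t) ∈ B (n m) ∧ C.getVert (nP + t) ∈ B (n (m+1))) := by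
              intro hS
              exact hno (nP + t) (by omega) (by omega) hS.1 hS.2
            have h2 := hstep _ _ hadj2 h1 hnotS
            rwa [show nP + t + 1 = nP + (t+1) from by omega] at h2
        have hAx := key iQ le_rfl
        rw [show nP + iQ = ix from rfl, hvx] at hAx
        exact hxnotS (hmerge x ⟨n jX, hjX_spec, hreach_x⟩ hAx)
      -- crossing on the x-to-a stretch
      have hcr2 : ∃ c, ix < c ∧ c ≤ L ∧ C.getVert c ∈ B (n m) ∧ C.getVert c ∈ B (n (m+1)) := by
        by_contra hno
        push_neg at hno
        have key : ∀ t, t ≤ L - ix →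
            ∃ t', C.getVert (L - t) ∈ B t' ∧
              (Tr.deleteEdges {s(n m, n (m+1))}).Reachable t' (n (m+1)) := by
          intro t
          induction t with
          | zero => intro _; rw [Nat.sub_zero, hvL]; exact hAsidea
          | succ t ih =>
            intro ht
            have h1 := ih (by omega)
            have hadj2 : G.Adj (C.getVert (L - t - 1)) (C.getVert (L - t)) := by
              have h3 := C.adj_getVert_succ (i := L - t - 1) (by omega)
              rwa [show L - t - 1 + 1 = L - t from by omega] at h3
            have hnotS : ¬(C.getVert (L - t) ∈ B (n m) ∧ C.getVert (L - t) ∈ B (n (m+1))) := by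
              intro hS
              exact hno (L - t) (by omega) (by omega) hS.1 hS.2
            have h2 := hstep _ _ hadj2.symm h1 hnotS
            rwa [show L - t - 1 = L - (t+1) from by omega] at h2
        have hAx := key (L - ix) le_rfl
        rw [show L - (L - ix) = ix from by omega, hvx] at hAx
        exact hxnotS (hmerge x ⟨n jX, hjX_spec, hreach_x⟩ hAx)
      obtain ⟨c1, hc11, hc12, hc13, hc14⟩ := hcr1
      obtain ⟨c2, hc21, hc22, hc23, hc24⟩ := hcr2
      exact ⟨c1, c2, fun _ _ => ⟨⟨hc11, hc12, hc13, hc14⟩, ⟨hc21, hc22, hc23, hc24⟩⟩⟩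
    choose c1 c2 hcsp using hcross
    have hpair : ∀ (t : TT) (i j : ℕ), i ≤ L → j ≤ L →
        C.getVert i ∈ B t → C.getVert j ∈ B t →
        min ((i - j) + (j - i)) (L - ((i - j) + (j - i))) ≤ k := by
      intro t i j hi hj h1 h2
      rcases le_total i j with h | h
      · have hb2 := hbag t _ h1 _ h2
        rw [hEd i j h hj] at hb2
        have : min (j - i) (L - (j - i)) ≤ k := by exact_mod_cast hb2
        omega
      · have hb2 := hbag t _ h2 _ h1
        rw [hEd j i h hi] at hb2
        have : min (i - j) (L - (i - j)) ≤ k := by exact_mod_cast hb2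
        omega
    obtain ⟨⟨hA11, hA12, hA13, hA14⟩, hA21, hA22, hA23, hA24⟩ := hcsp jX le_rfl hjXlt
    have hxc1 : min (ix - c1 jX) (L - (ix - c1 jX)) ≤ k := by
      have hb2 := hbag (n jX) _ hA13 x hjX_spec
      rw [← hvx, hEd (c1 jX) ix (le_of_lt hA12) hixL] at hb2
      exact_mod_cast hb2
    have hxc2 : min (c2 jX - ix) (L - (c2 jX - ix)) ≤ k := by
      have hb2 := hbag (n jX) x hjX_spec _ hA23
      rw [← hvx, hEd ix (c2 jX) (le_of_lt hA21) hA22] at hb2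
      exact_mod_cast hb2
    have hdich : ∀ m, jX ≤ m → m < jA → min (c2 m - c1 m) (L - (c2 m - c1 m)) ≤ k := by
      intro m h1 h2
      obtain ⟨⟨hB11, hB12, hB13, hB14⟩, hB21, hB22, hB23, hB24⟩ := hcsp m h1 h2
      have hb2 := hbag (n m) _ hB13 _ hB23
      rw [hEd (c1 m) (c2 m) (by omega) hB22] at hb2
      exact_mod_cast hb2
    by_cases hPex : ∃ m, jX ≤ m ∧ m < jA ∧ k < c2 m - c1 m
    · set mII := Nat.find hPex with hmIIdef
      obtain ⟨hmII1, hmII2, hmII3⟩ := Nat.find_spec hPex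
      rw [← hmIIdef] at hmII1 hmII2 hmII3
      have hIIx : mII ≠ jX := by
        intro h
        have hd := hdich jX le_rfl hjXlt
        rw [h] at hmII3
        exact aux_arith_jX k L nP ix (c1 jX) (c2 jX) hk hA11 hA12 hA21 hA22
          hxc1 hxc2 hd hmII3 hX1 hX2
      set mI := mII - 1 with hmIdef
      have hmIlt : mI < mII := by omega
      have hnotII : ¬(jX ≤ mI ∧ mI < jA ∧ k < c2 mI - c1 mI) := Nat.find_min hPex hmIlt
      have hmI1 : jX ≤ mI := by omega
      have hmI2 : mI < jA := by omega
      have hTI : c2 mI - c1 mI ≤ k := by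
        by_contra h
        exact hnotII ⟨hmI1, hmI2, by omega⟩
      obtain ⟨⟨hI11, hI12, hI13, hI14⟩, hI21, hI22, hI23, hI24⟩ := hcsp mI hmI1 hmI2
      obtain ⟨⟨hJ11, hJ12, hJ13, hJ14⟩, hJ21, hJ22, hJ23, hJ24⟩ := hcsp mII hmII1 hmII2
      have hTII : L - (c2 mII - c1 mII) ≤ k := by
        have := hdich mII hmII1 hmII2
        omega
      rw [show mI + 1 = mII from by omega] at hI14 hI24
      have hp1 := hpair (n mII) (c1 mII) (c1 mI) (by omega) (by omega) hJ13 hI14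
      have hp2 := hpair (n mII) (c2 mII) (c2 mI) hJ22 hI22 hJ23 hI24
      have hp3 := hpair (n mII) (c1 mII) (c2 mI) (by omega) hI22 hJ13 hI24
      exact aux_arith_switch k L nP ix (c1 mI) (c2 mI) (c1 mII) (c2 mII) hk
        hI11 hI12 hI21 hI22 hJ11 hJ12 hJ21 hJ22 hTI hTII hX1 hX2 hp1 hp2 hp3
    · push_neg at hPex
      set m0 := jA - 1 with hm0def
      have hm01 : jX ≤ m0 := by omega
      have hm02 : m0 < jA := by omega
      have hTI := hPex m0 hm01 hm02
      obtain ⟨⟨hI11, hI12, hI13, hI14⟩, hI21, hI22, hI23, hI24⟩ := hcsp m0 hm01 hm02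
      rw [show m0 + 1 = jA from by omega] at hI14 hI24
      have hy0' : y0 ∈ B (n jA) := hy0
      have ht1 : G.edist x y0 ≤ ((min (ix - c1 m0) (L - (ix - c1 m0)) + k : ℕ) : ℕ∞) := by
        calc G.edist x y0 ≤ G.edist x (C.getVert (c1 m0)) + G.edist (C.getVert (c1 m0)) y0 :=
              SimpleGraph.edist_triangle
          _ ≤ _ := by
              have e1 : G.edist x (C.getVert (c1 m0)) =
                  ((min (ix - c1 m0) (L - (ix - c1 m0)) : ℕ) : ℕ∞) := by
                rw [SimpleGraph.edist_comm, ← hvx, hEd (c1 m0) ix (by omega) hixL]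
              have e2 := hbag (n jA) _ hI14 y0 hy0'
              rw [e1]
              push_cast
              exact add_le_add le_rfl e2
      have ht2 : G.edist x y0 ≤ ((min (c2 m0 - ix) (L - (c2 m0 - ix)) + k : ℕ) : ℕ∞) := by
        calc G.edist x y0 ≤ G.edist x (C.getVert (c2 m0)) + G.edist (C.getVert (c2 m0)) y0 :=
              SimpleGraph.edist_triangle
          _ ≤ _ := by
              have e1 : G.edist x (C.getVert (c2 m0)) =
                  ((min (c2 m0 - ix) (L - (c2 m0 - ix)) : ℕ) : ℕ∞) := by
                rw [← hvx, hEd ix (c2 m0) (by omega) hI22]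
              have e2 := hbag (n jA) _ hI24 y0 hy0'
              rw [e1]
              push_cast
              exact add_le_add le_rfl e2
      have hcy0 := hcon y0 hy0P
      have h9 : 3 * k < 2 * (min (ix - c1 m0) (L - (ix - c1 m0)) + k) := by
        have := lt_of_lt_of_le hcy0 (mul_le_mul_right ht1 2)
        exact_mod_cast this
      have h10 : 3 * k < 2 * (min (c2 m0 - ix) (L - (c2 m0 - ix)) + k) := by
        have := lt_of_lt_of_le hcy0 (mul_le_mul_right ht2 2)
        exact_mod_cast this
      exact aux_arith_direct k L nP ix (c1 m0) (c2 m0) hk hI11 hI12 hI21 hI22 hTI h9 h10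
end
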